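/- Let a, b, c be pairwise coprime positive integers. Then every integer t > (1/2)(a + b + c) + (1/2)√((1/3)(a + b + c)(a + b + c + 2abc) + (8/3)(ab + bc + ca)) can be written as t = ax + by + cz with strictly positive integers x, y, z. Equivalently, the largest integer not representable as a strictly positive integer combination of a, b, c, namely F*(a, b, c) = F(a, b, c) + a + b + c, satisfies F*(a, b, c) ≤ (1/2)(a + b + c) + (1/2)√((1/3)(a + b + c)(a + b + c + 2abc) + (8/3)(ab + bc + ca)). -/

import Mathlib

/-!
Suppose `t ≥ a + b + c` is not a positive combination of `a, b, c` and put `n = t - (a + b + c)`, so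
that `n` is not a nonnegative combination. Then for every `z ≥ 0` the number `n - c z` is not a
nonnegative combination of `a, b`, which forces `n - c z + a b ≤ a u_z + b w_z` for the least
nonnegative residues with `a u_z ≡ n - c z (mod b)` and `b w_z ≡ n - c z (mod a)`. These residues
form arithmetic progressions whose steps are units, so any `b` (resp. `a`) consecutive `u_z`
(resp. `w_z`) are distinct and their partial sums are at most those of the largest residues.
Summing over `0 ≤ z ≤ ⌊n / c⌋` gives `4 n (n + a + b + c) ≤ a b c (a + b)`, and likewise for the
other two choices of the slicing generator. Slicing along the largest generator, an elementary
inequality shows that this contradicts `t` exceeding the bound.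
-/

open Finset

theorem two_mul_sum_range_sub_mul (p q : ℤ) (K : ℕ) :
    2 * ∑ z ∈ range K, (p - q * z) = K * (2 * p - q * (K - 1)) := by
  induction K with
  | zero => simp
  | succ K ih => rw [sum_range_succ, mul_add, ih]; push_cast; ring

theorem two_mul_sum_range_le_of_injOn {f : ℕ → ℤ} {c : ℤ} {K : ℕ} (hle : ∀ z ∈ range K, f z ≤ c)
    (hinj : Set.InjOn f (range K)) : 2 * ∑ z ∈ range K, f z ≤ K * (2 * c - K + 1) := by
  have hsum : ∑ z ∈ range K, f z ≤ ∑ n ∈ range K, (c - 1 * n) := by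
    have := sum_le_sum_range (s := (range K).image f) (c := c) (by simpa using hle)
    simpa [sum_image hinj, card_image_of_injOn hinj] using this
  linarith [two_mul_sum_range_sub_mul c 1 K]

theorem sum_range_le_of_periodic {f : ℕ → ℤ} {b : ℕ} (hb : 0 < b) (hlt : ∀ z, f z < b)
    (hper : Function.Periodic f b) (hinj : Set.InjOn f (Set.Iio b)) (K : ℕ) :
    8 * ∑ z ∈ range K, f z + 4 * K ≤ 4 * K * b + b ^ 2 := by
  have hblock : ∀ K ≤ b, 2 * ∑ z ∈ range K, f z ≤ K * (2 * (b - 1) - K + 1) := fun K hK =>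
    two_mul_sum_range_le_of_injOn (fun z _ => Int.le_sub_one_of_lt (hlt z))
      (hinj.mono fun z hz => by simp at hz ⊢; omega)
  induction K using Nat.strong_induction_on with
  | _ K ih =>
  rcases le_or_gt K b with hKb | hbK
  · nlinarith [hblock K hKb, sq_nonneg ((b : ℤ) - 2 * K)]
  · obtain ⟨r, rfl⟩ : ∃ r, K = b + r := ⟨K - b, by omega⟩
    have hfull := hblock b le_rfl
    have hrest := ih r (by omega)
    rw [sum_range_add]
    simp only [add_comm b, hper _]
    push_cast
    linarith

theorem sum_range_val_affine_le {b : ℕ} [NeZero b] (γ δ : ZMod b) (hδ : IsUnit δ) (K : ℕ) :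
    8 * ∑ z ∈ range K, ((γ + δ * z).val : ℤ) + 4 * K ≤ 4 * K * b + b ^ 2 := by
  refine sum_range_le_of_periodic (NeZero.pos b) (fun z => by exact_mod_cast ZMod.val_lt _)
    (fun z => by simp) (fun z hz z' hz' h => ?_) K
  have hzz' : (z : ZMod b) = z' :=
    hδ.mul_left_cancel (add_left_cancel (ZMod.val_injective b (by exact_mod_cast h)))
  rwa [ZMod.natCast_eq_natCast_iff', Nat.mod_eq_of_lt hz, Nat.mod_eq_of_lt hz'] at hzz'

theorem natCast_mul_val_inv_mul_modEq {a b : ℕ} [NeZero b] (hab : a.Coprime b) (m : ℤ) :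
    a * (((a : ZMod b)⁻¹ * m).val : ℤ) ≡ m [ZMOD b] := by
  rw [← ZMod.intCast_eq_intCast_iff]
  push_cast
  rw [ZMod.natCast_val, ZMod.cast_id', id, ← mul_assoc, ZMod.coe_mul_inv_eq_one _ hab, one_mul]

theorem isUnit_inv_natCast {a b : ℕ} (hab : a.Coprime b) : IsUnit (a : ZMod b)⁻¹ := by
  rw [← ZMod.coe_unitOfCoprime a hab, ZMod.inv_coe_unit]
  exact Units.isUnit _

theorem add_mul_le_of_not_nonnegComb {a b : ℕ} (hab : a.Coprime b) {m u w : ℤ} (hu : 0 ≤ u)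
    (hw : 0 ≤ w) (hau : a * u ≡ m [ZMOD b]) (hbw : b * w ≡ m [ZMOD a])
    (hm : ¬ ∃ x y : ℤ, 0 ≤ x ∧ 0 ≤ y ∧ m = a * x + b * y) :
    m + a * b ≤ a * u + b * w := by
  obtain ⟨k, hk⟩ : (a * b : ℤ) ∣ a * u + b * w - m := by
    refine (Nat.isCoprime_iff_coprime.2 hab).mul_dvd ?_ ?_
    · convert (dvd_mul_right (a : ℤ) u).sub hbw.dvd using 1; ring
    · convert (dvd_mul_right (b : ℤ) w).sub hau.dvd using 1; ring
  by_contra! hlt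
  have hk0 : k ≤ 0 := by
    by_contra! hk1
    nlinarith [mul_le_mul_of_nonneg_left (show 1 ≤ k by omega) (by positivity : (0 : ℤ) ≤ a * b)]
  exact hm ⟨u, w - a * k, hu, by nlinarith, by linarith⟩

theorem four_mul_le_of_slices {a b c : ℕ} (ha : 0 < a) (hb : 0 < b) (hab : a.Coprime b)
    (hac : a.Coprime c) (hbc : b.Coprime c) {n : ℤ}
    (hn : ∀ z : ℕ, ¬ ∃ x y : ℤ, 0 ≤ x ∧ 0 ≤ y ∧ n - c * z = a * x + b * y) (K : ℕ) :
    4 * K * (2 * n - c * (K - 1) + a + b) ≤ a * b * (a + b) := by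
  have : NeZero a := ⟨ha.ne'⟩
  have : NeZero b := ⟨hb.ne'⟩
  -- `u z` and `w z` are the least nonnegative solutions of `a u ≡ n - c z (mod b)` and
  -- `b w ≡ n - c z (mod a)`
  set u : ℕ → ℤ := fun z => (((a : ZMod b)⁻¹ * n + -((a : ZMod b)⁻¹ * c) * z).val : ℤ)
  set w : ℕ → ℤ := fun z => (((b : ZMod a)⁻¹ * n + -((b : ZMod a)⁻¹ * c) * z).val : ℤ)
  have hslice : ∀ z ∈ range K, n + a * b - c * z ≤ a * u z + b * w z := by
    intro z _
    rw [add_sub_right_comm]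
    refine add_mul_le_of_not_nonnegComb hab (by positivity) (by positivity) ?_ ?_ (hn z)
    · convert natCast_mul_val_inv_mul_modEq hab (n - c * z) using 4; push_cast; ring
    · convert natCast_mul_val_inv_mul_modEq hab.symm (n - c * z) using 4; push_cast; ring
  have hu := sum_range_val_affine_le ((a : ZMod b)⁻¹ * (n : ZMod _)) _
    ((isUnit_inv_natCast hab).mul ((ZMod.isUnit_iff_coprime c b).2 hbc.symm)).neg K
  have hw := sum_range_val_affine_le ((b : ZMod a)⁻¹ * (n : ZMod _)) _
    ((isUnit_inv_natCast hab.symm).mul ((ZMod.isUnit_iff_coprime c a).2 hac.symm)).neg K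
  have hsum := sum_le_sum hslice
  rw [sum_add_distrib, ← mul_sum, ← mul_sum] at hsum
  have hgauss := two_mul_sum_range_sub_mul (n + a * b) c K
  nlinarith [mul_le_mul_of_nonneg_left hu (by positivity : (0 : ℤ) ≤ a),
    mul_le_mul_of_nonneg_left hw (by positivity : (0 : ℤ) ≤ b)]

def IsPosComb (a b c : ℕ) (t : ℤ) : Prop :=
  ∃ x y z : ℤ, 0 < x ∧ 0 < y ∧ 0 < z ∧ t = a * x + b * y + c * z

theorem IsPosComb.of_rotate {a b c : ℕ} {t : ℤ} (h : IsPosComb b c a t) : IsPosComb a b c t := by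
  obtain ⟨x, y, z, hx, hy, hz, rfl⟩ := h
  exact ⟨z, x, y, hz, hx, hy, by ring⟩

theorem four_mul_sub_le_of_not_isPosComb {a b c : ℕ} (ha : 0 < a) (hb : 0 < b) (hc : 0 < c)
    (hab : a.Coprime b) (hac : a.Coprime c) (hbc : b.Coprime c) {t : ℤ}
    (ht : ¬ IsPosComb a b c t) (hst : (a + b + c : ℤ) ≤ t) :
    4 * t * (t - (a + b + c)) ≤ a * b * c * (a + b) := by
  obtain ⟨N, hN⟩ := Int.eq_ofNat_of_zero_le (sub_nonneg.2 hst)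
  have hslices : ∀ z : ℕ, ¬ ∃ x y : ℤ, 0 ≤ x ∧ 0 ≤ y ∧ (N : ℤ) - c * z = a * x + b * y := by
    rintro z ⟨x, y, hx, hy, hxy⟩
    exact ht ⟨x + 1, y + 1, z + 1, by omega, by omega, by omega, by linarith⟩
  -- the best number of slices is `⌊N / c⌋ + 1`
  have hK := four_mul_le_of_slices ha hb hab hac hbc hslices (N / c + 1)
  obtain ⟨Z, ρ, hρ, rfl⟩ : ∃ Z ρ, ρ < c ∧ N = c * Z + ρ :=
    ⟨N / c, N % c, Nat.mod_lt N hc, (Nat.div_add_mod N c).symm⟩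
  rw [Nat.mul_add_div hc, Nat.div_eq_of_lt hρ] at hK
  rw [show t = (a + b + c) + (c * Z + ρ : ℕ) by omega]
  push_cast at hK ⊢
  nlinarith [mul_le_mul_of_nonneg_left hK (by positivity : (0 : ℤ) ≤ c),
    mul_nonneg (by omega : (0 : ℤ) ≤ c - ρ) (by positivity : (0 : ℤ) ≤ ρ + a + b)]

noncomputable def fstarRadicand (a b c : ℝ) : ℝ :=
  (1 / 3) * (a + b + c) * (a + b + c + 2 * a * b * c) + (8 / 3) * (a * b + b * c + c * a)

noncomputable def fstarBound (a b c : ℝ) : ℝ :=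
  (1 / 2) * (a + b + c) + (1 / 2) * √(fstarRadicand a b c)

theorem two_mul_sq_add_le {a b c : ℝ} (ha : 1 ≤ a) (hb : 1 ≤ b) (hac : a ≤ c) (hbc : b ≤ c) :
    2 * (a + b + c) ^ 2 ≤ a * b * c * (2 * c - a - b) + 8 * (a * b + b * c + c * a) := by
  have ha0 : 0 ≤ a - 1 := by linarith
  have hb0 : 0 ≤ b - 1 := by linarith
  have hca : 0 ≤ c - a := by linarith
  have hcb : 0 ≤ c - b := by linarith
  have hc0 : 0 ≤ c := by linarith
  nlinarith [mul_nonneg (mul_nonneg (mul_nonneg ha0 hb0) hc0) hca,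
    mul_nonneg (mul_nonneg (mul_nonneg ha0 hb0) hc0) hcb, mul_nonneg (mul_nonneg hb0 hc0) hca,
    mul_nonneg (mul_nonneg ha0 hc0) hcb, mul_nonneg (mul_nonneg hca hc0) hcb,
    mul_nonneg hca hcb, sq_nonneg (a - b), sq_nonneg (a + b - c), mul_nonneg ha0 hb0,
    mul_nonneg (mul_nonneg ha0 hb0) (mul_nonneg hc0 hc0)]

theorem sq_add_mul_le_fstarRadicand {a b c : ℝ} (ha : 1 ≤ a) (hb : 1 ≤ b) (hc : 1 ≤ c) :
    (a + b + c) ^ 2 + a * b * c * (a + b) ≤ fstarRadicand a b c ∨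
      (a + b + c) ^ 2 + a * b * c * (b + c) ≤ fstarRadicand a b c ∨
      (a + b + c) ^ 2 + a * b * c * (c + a) ≤ fstarRadicand a b c := by
  unfold fstarRadicand
  rcases le_total a b with hab | hba
  · rcases le_total b c with hbc | hcb
    · exact Or.inl (by nlinarith [two_mul_sq_add_le ha hb (hab.trans hbc) hbc])
    · exact Or.inr (Or.inr (by nlinarith [two_mul_sq_add_le hc ha hcb hab]))
  · rcases le_total a c with hac | hca
    · exact Or.inl (by nlinarith [two_mul_sq_add_le ha hb hac (hba.trans hac)])
    · exact Or.inr (Or.inl (by nlinarith [two_mul_sq_add_le hb hc hba hca]))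

theorem lt_and_lt_of_fstarBound_lt {a b c t : ℝ} (ha : 1 ≤ a) (hb : 1 ≤ b) (hc : 1 ≤ c)
    (ht : fstarBound a b c < t) :
    a + b + c < t ∧ (a * b * c * (a + b) < 4 * t * (t - (a + b + c)) ∨
      a * b * c * (b + c) < 4 * t * (t - (a + b + c)) ∨
      a * b * c * (c + a) < 4 * t * (t - (a + b + c))) := by
  have hsqrt : √(fstarRadicand a b c) < 2 * t - (a + b + c) := by unfold fstarBound at ht; linarith
  have hsq : fstarRadicand a b c < (a + b + c) ^ 2 + 4 * t * (t - (a + b + c)) := by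
    linarith [Real.lt_sq_of_sqrt_lt hsqrt]
  have habc : 0 < a * b * c := by positivity
  rcases sq_add_mul_le_fstarRadicand ha hb hc with h | h | h
  all_goals refine ⟨by nlinarith [(Real.sqrt_nonneg _).trans_lt hsqrt], ?_⟩
  exacts [Or.inl (by linarith), Or.inr (Or.inl (by linarith)), Or.inr (Or.inr (by linarith))]

/-- Let `a, b, c` be pairwise coprime positive integers. Then every integer
`t` exceeding
`(1/2)(a+b+c) + (1/2)√((1/3)(a+b+c)(a+b+c+2abc) + (8/3)(ab+bc+ca))`
is a strictly positive integral combination of `a, b, c`; equivalently, the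
largest integer `F*(a,b,c)` not so representable satisfies this bound. -/
theorem Fstar_upper_bound (a b c : ℕ) (ha : 0 < a) (hb : 0 < b) (hc : 0 < c)
    (hab : Nat.gcd a b = 1) (hbc : Nat.gcd b c = 1) (hac : Nat.gcd a c = 1) :
    (∀ t : ℤ,
      (t : ℝ) > (1 / 2) * ((a : ℝ) + b + c)
          + (1 / 2) * Real.sqrt ((1 / 3) * ((a : ℝ) + b + c) * ((a : ℝ) + b + c
              + 2 * a * b * c) + (8 / 3) * ((a : ℝ) * b + (b : ℝ) * c + (c : ℝ) * a)) →
      ∃ x y z : ℤ, 0 < x ∧ 0 < y ∧ 0 < z ∧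
        t = (a : ℤ) * x + (b : ℤ) * y + (c : ℤ) * z) ∧
    (∀ Fstar : ℤ,
      IsGreatest {t : ℤ | ¬ ∃ x y z : ℤ, 0 < x ∧ 0 < y ∧ 0 < z ∧
          t = (a : ℤ) * x + (b : ℤ) * y + (c : ℤ) * z} Fstar →
      (Fstar : ℝ) ≤ (1 / 2) * ((a : ℝ) + b + c)
          + (1 / 2) * Real.sqrt ((1 / 3) * ((a : ℝ) + b + c) * ((a : ℝ) + b + c
              + 2 * a * b * c) + (8 / 3) * ((a : ℝ) * b + (b : ℝ) * c + (c : ℝ) * a))) := by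
  have hrep : ∀ t : ℤ, fstarBound a b c < t → IsPosComb a b c t := by
    intro t ht
    by_contra hnr
    obtain ⟨hsum_lt, hlt⟩ := lt_and_lt_of_fstarBound_lt (by exact_mod_cast ha) (by exact_mod_cast hb)
      (by exact_mod_cast hc) ht
    have hst : (a + b + c : ℤ) ≤ t := by exact_mod_cast hsum_lt.le
    have h₁ : 4 * t * (t - (a + b + c)) ≤ a * b * c * (a + b) :=
      four_mul_sub_le_of_not_isPosComb ha hb hc hab hac hbc hnr hst
    have h₂ : 4 * t * (t - (a + b + c)) ≤ a * b * c * (b + c) := by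
      linarith [four_mul_sub_le_of_not_isPosComb hb hc ha hbc (Nat.Coprime.symm hab)
        (Nat.Coprime.symm hac) (fun h => hnr h.of_rotate) (by linarith)]
    have h₃ : 4 * t * (t - (a + b + c)) ≤ a * b * c * (c + a) := by
      linarith [four_mul_sub_le_of_not_isPosComb hc ha hb (Nat.Coprime.symm hac)
        (Nat.Coprime.symm hbc) hab (fun h => hnr h.of_rotate.of_rotate) (by linarith)]
    rcases hlt with h | h | h
    · exact h.not_ge (by exact_mod_cast h₁)
    · exact h.not_ge (by exact_mod_cast h₂)
    · exact h.not_ge (by exact_mod_cast h₃)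
  exact ⟨hrep, fun F hF => not_lt.1 fun h => hF.1 (hrep F h)⟩
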